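/- arXiv:1902.03976 — 4 statements merged into one kernel-verified Lean document; each statement's English description precedes it below -/
import Mathlib

section
/- Let h be a truncation function and let x ↦ K̄(x, ·) assign to each x ∈ ℝ^d a Borel measure on ℝ^d with K̄(x, {0}) = 0 and ∫ (1 ∧ ‖y‖²) K̄(x, dy) < ∞. For each x and ξ ∈ ℝ^d the integral ψ(x, ξ) := ∫ (1 − e^{i⟨y,ξ⟩} + i⟨h(y), ξ⟩) K̄(x, dy) is well defined. If for every ξ ∈ ℝ^d the map x ↦ ψ(x, ξ) is continuous on ℝ^d, then for every m > 0 one has lim_{a→∞} sup_{‖x‖ ≤ m} K̄(x, {y ∈ ℝ^d : ‖y‖ > a}) = 0. -/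
open MeasureTheory Filter Set Topology
open scoped ENNReal RealInnerProductSpace

/-!
Write `g_x(ξ) = Re ψ(x, ξ) = ∫ (1 - cos ⟪y, ξ⟫) K̄(x, dy)`; it is continuous in `x` and in `ξ` and
vanishes at `ξ = 0`. By the Riemann–Lebesgue lemma the mean of `1 - cos ⟪y, ·⟫` over a set `A` of
finite positive volume tends to `1` as `‖y‖ → ∞`, so by Tonelli
`vol A / 2 · K̄(x, {‖y‖ > R}) ≤ ∫_A g_x` once `R` is large. If the tails were not uniformly small
on the ball, compactness would give `x_k → x̄` whose tails stay above some `ε > 0`. But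
`g_{x_k} → g_{x̄}` pointwise and `g_{x̄}` is small near `0`, so dominated convergence on a suitable
`A` near `0`, on which all the `g_{x_k}` are bounded, makes `∫_A g_{x_k} < ε · vol A / 2`.
-/

lemma exists_measure_inter_setOf_le_ne_zero {α : Type*} [MeasurableSpace α] {μ : Measure α}
    {f : α → ℝ≥0∞} (hf : ∀ x, f x ≠ ⊤) {s : Set α} (hs : μ s ≠ 0) :
    ∃ N : ℕ, μ (s ∩ {x | f x ≤ N}) ≠ 0 := by
  by_contra! hnull
  refine hs (measure_mono_null (fun x hx => ?_) (measure_iUnion_null hnull))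
  obtain ⟨N, hN⟩ := ENNReal.exists_nat_gt (hf x)
  exact mem_iUnion.mpr ⟨N, hx, hN.le⟩

lemma iSup_ne_top_of_tendsto {u : ℕ → ℝ≥0∞} {a : ℝ≥0∞} (hu : ∀ n, u n ≠ ⊤) (ha : a ≠ ⊤)
    (hlim : Tendsto u atTop (𝓝 a)) : ⨆ n, u n ≠ ⊤ := by
  obtain ⟨B, hB⟩ := ((ENNReal.tendsto_toReal ha).comp hlim).bddAbove_range
  refine ne_top_of_le_ne_top (ENNReal.ofReal_ne_top (r := B)) (iSup_le fun n => ?_)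
  rw [← ENNReal.ofReal_toReal (hu n)]
  exact ENNReal.ofReal_le_ofReal (hB ⟨n, rfl⟩)

lemma mul_measure_le_lintegral_lintegral {α β : Type*} [MeasurableSpace α] [MeasurableSpace β]
    {μ : Measure α} {ν : Measure β} [SFinite ν] {f : α → β → ℝ≥0∞}
    (hf : Measurable (Function.uncurry f)) {s : Set α} (hs : MeasurableSet s) (hμs : μ s ≠ ⊤)
    {c : ℝ≥0∞} (hc : ∀ y ∈ s, c ≤ ∫⁻ ξ, f y ξ ∂ν) :
    c * μ s ≤ ∫⁻ ξ, ∫⁻ y, f y ξ ∂μ ∂ν := by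
  have : IsFiniteMeasure (μ.restrict s) := isFiniteMeasure_restrict.mpr hμs
  calc c * μ s = ∫⁻ _ in s, c ∂μ := (setLIntegral_const s c).symm
    _ ≤ ∫⁻ y in s, ∫⁻ ξ, f y ξ ∂ν ∂μ := setLIntegral_mono' hs hc
    _ = ∫⁻ ξ, ∫⁻ y in s, f y ξ ∂μ ∂ν := lintegral_lintegral_swap hf.aemeasurable
    _ ≤ ∫⁻ ξ, ∫⁻ y, f y ξ ∂μ ∂ν := lintegral_mono fun ξ => setLIntegral_le_lintegral s _

theorem exists_setLIntegral_lt_mul_of_tendsto {X : Type*} [TopologicalSpace X]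
    [MeasurableSpace X] [OpensMeasurableSpace X] (μ : Measure X) [μ.IsOpenPosMeasure]
    [IsLocallyFiniteMeasure μ] {g : ℕ → X → ℝ≥0∞} {g₀ : X → ℝ≥0∞} (hg : ∀ k, Measurable (g k))
    (hg_fin : ∀ k x, g k x ≠ ⊤) (hg₀_fin : ∀ x, g₀ x ≠ ⊤)
    (hlim : ∀ x, Tendsto (fun k => g k x) atTop (𝓝 (g₀ x))) {x₀ : X} (hcont : ContinuousAt g₀ x₀)
    {ε : ℝ≥0∞} (hε : g₀ x₀ < ε) :
    ∃ A, MeasurableSet A ∧ μ A ≠ 0 ∧ μ A ≠ ⊤ ∧ ∀ᶠ k in atTop, ∫⁻ x in A, g k x ∂μ < ε * μ A := by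
  obtain ⟨ε', hε₀', hε'⟩ := exists_between hε
  obtain ⟨V, hV, hV_fin⟩ := μ.finiteAt_nhds x₀
  set U := interior (V ∩ {x | g₀ x < ε'})
  have hU : U ∈ 𝓝 x₀ := interior_mem_nhds.mpr (inter_mem hV (hcont (Iio_mem_nhds hε₀')))
  -- dominated convergence needs a set of positive measure on which all `g k` are bounded
  obtain ⟨N, hN⟩ := exists_measure_inter_setOf_le_ne_zero (f := fun x => ⨆ k, g k x)
    (fun x => iSup_ne_top_of_tendsto (hg_fin · x) (hg₀_fin x) (hlim x))
    (Measure.measure_pos_of_mem_nhds μ hU).ne'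
  set A := U ∩ {x | ⨆ k, g k x ≤ N}
  have hA : MeasurableSet A :=
    isOpen_interior.measurableSet.inter (measurableSet_le (Measurable.iSup hg) measurable_const)
  have hA_fin : μ A ≠ ⊤ :=
    ((measure_mono (inter_subset_left.trans (interior_subset.trans inter_subset_left))).trans_lt
      hV_fin).ne
  refine ⟨A, hA, hN, hA_fin, ?_⟩
  have hlimA : Tendsto (fun k => ∫⁻ x in A, g k x ∂μ) atTop (𝓝 (∫⁻ x in A, g₀ x ∂μ)) :=
    tendsto_lintegral_of_dominated_convergence (fun _ => N) hg
      (fun k => ae_restrict_of_forall_mem hA fun x hx => (le_iSup (g · x) k).trans hx.2)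
      (by simpa using ENNReal.mul_ne_top (ENNReal.natCast_ne_top N) hA_fin) (ae_of_all _ hlim)
  have hA_lt : ∫⁻ x in A, g₀ x ∂μ < ε * μ A :=
    calc ∫⁻ x in A, g₀ x ∂μ ≤ ∫⁻ _ in A, ε' ∂μ :=
          setLIntegral_mono measurable_const fun x hx => (interior_subset hx.1).2.le
      _ = ε' * μ A := setLIntegral_const A ε'
      _ < ε * μ A := (ENNReal.mul_lt_mul_iff_left hN hA_fin).mpr hε'
  exact hlimA.eventually (Iio_mem_nhds hA_lt)

theorem tendsto_iSup_atTop_nhds_zero_of_isCompact {X : Type*} [TopologicalSpace X]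
    [FirstCountableTopology X] {S : Set X} (hS : IsCompact S) {F : X → ℝ → ℝ≥0∞}
    (hF : ∀ x, Antitone (F x))
    (htail : ∀ (x : ℕ → X) (x₀ : X), Tendsto x atTop (𝓝 x₀) →
      ∀ ε > 0, ∃ R, ∀ᶠ k in atTop, F (x k) R < ε) :
    Tendsto (fun a => ⨆ x : S, F x a) atTop (𝓝 0) := by
  refine ENNReal.tendsto_nhds_zero.mpr fun ε hε => ?_
  by_contra hfreq
  have hbad : ∀ n : ℕ, ∃ x ∈ S, ε < F x n := by
    intro n
    obtain ⟨a, ha, hna⟩ :=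
      ((not_eventually.mp hfreq).and_eventually (eventually_ge_atTop (n : ℝ))).exists
    obtain ⟨x, hx⟩ := lt_iSup_iff.mp (not_le.mp ha)
    exact ⟨x, x.2, hx.trans_le (hF x hna)⟩
  choose x hxS hx using hbad
  obtain ⟨x₀, -, φ, hφ, hlim⟩ := hS.tendsto_subseq hxS
  obtain ⟨R, hR⟩ := htail (x ∘ φ) x₀ hlim ε hε
  have hφR : ∀ᶠ k in atTop, R ≤ (φ k : ℝ) :=
    (tendsto_natCast_atTop_atTop.comp hφ.tendsto_atTop).eventually_ge_atTop R
  obtain ⟨k, hk, hkR⟩ := (hR.and hφR).exists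
  exact (hx (φ k)).not_ge ((hF _ hkR).trans hk.le)

lemma le_max_mul_min_one_sq_norm {E : Type*} [SeminormedAddCommGroup E] {φ : E → ℝ}
    {L B δ : ℝ} (hδ : 0 < δ) (hδ₁ : δ ≤ 1) (hB : 0 ≤ B)
    (hsmall : ∀ y, ‖y‖ < δ → φ y ≤ L * ‖y‖ ^ 2) (hlarge : ∀ y, φ y ≤ B) (y : E) :
    φ y ≤ max L (B / δ ^ 2) * min 1 (‖y‖ ^ 2) := by
  rcases lt_or_ge ‖y‖ δ with hy | hy
  · have hy₁ : ‖y‖ ^ 2 ≤ 1 := pow_le_one₀ (norm_nonneg y) (hy.le.trans hδ₁)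
    rw [min_eq_right hy₁]
    exact (hsmall y hy).trans (by gcongr; exact le_max_left _ _)
  · have hδy : δ ^ 2 ≤ min 1 (‖y‖ ^ 2) :=
      le_min (pow_le_one₀ hδ.le hδ₁) (pow_le_pow_left₀ hδ.le hy 2)
    calc φ y ≤ B / δ ^ 2 * δ ^ 2 := by rw [div_mul_cancel₀ B (by positivity)]; exact hlarge y
      _ ≤ max L (B / δ ^ 2) * min 1 (‖y‖ ^ 2) := by gcongr; exact le_max_right _ _

lemma norm_exp_I_mul_ofReal_sub_one_sub_le (t : ℝ) :
    ‖Complex.exp (Complex.I * t) - 1 - Complex.I * t‖ ≤ 2 * t ^ 2 := by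
  have hIt : ‖Complex.I * t‖ = |t| := by simp
  rcases le_or_gt |t| 1 with ht | ht
  · calc _ ≤ ‖Complex.I * t‖ ^ 2 := Complex.norm_exp_sub_one_sub_id_le (hIt ▸ ht)
      _ ≤ 2 * t ^ 2 := by rw [hIt, sq_abs]; nlinarith [sq_nonneg t]
  · calc _ ≤ ‖Complex.exp (Complex.I * t) - 1‖ + ‖Complex.I * t‖ := norm_sub_le _ _
      _ ≤ |t| + |t| := by
          rw [hIt]; gcongr; simpa using Real.norm_exp_I_mul_ofReal_sub_one_le (x := t)
      _ ≤ 2 * t ^ 2 := by nlinarith [sq_abs t]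

section InnerProductSpace

variable {E : Type*} [NormedAddCommGroup E] [InnerProductSpace ℝ E]

lemma sq_inner_le_sq_norm_mul_sq_norm (y ξ : E) : ⟪y, ξ⟫ ^ 2 ≤ ‖ξ‖ ^ 2 * ‖y‖ ^ 2 := by
  rw [← sq_abs, ← mul_pow, mul_comm]
  exact pow_le_pow_left₀ (abs_nonneg _) (abs_real_inner_le_norm y ξ) 2

lemma one_sub_cos_inner_le (y ξ : E) :
    1 - Real.cos ⟪y, ξ⟫ ≤ max (‖ξ‖ ^ 2 / 2) 2 * min 1 (‖y‖ ^ 2) := by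
  have key := le_max_mul_min_one_sq_norm (φ := fun y => 1 - Real.cos ⟪y, ξ⟫) (L := ‖ξ‖ ^ 2 / 2)
    one_pos le_rfl zero_le_two
    (fun y _ => by
      nlinarith [Real.one_sub_sq_div_two_le_cos (x := ⟪y, ξ⟫), sq_inner_le_sq_norm_mul_sq_norm y ξ])
    (fun y => by linarith [Real.neg_one_le_cos ⟪y, ξ⟫]) y
  simpa using key

lemma exists_norm_levy_integrand_le {h : E → E} (hh_bdd : ∃ C : ℝ, ∀ y, ‖h y‖ ≤ C)
    (hh_id : ∀ᶠ y in 𝓝 0, h y = y) (ξ : E) :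
    ∃ M : ℝ, ∀ y, ‖1 - Complex.exp (Complex.I * (⟪y, ξ⟫ : ℝ)) + Complex.I * (⟪h y, ξ⟫ : ℝ)‖
      ≤ M * min 1 (‖y‖ ^ 2) := by
  obtain ⟨C, hC⟩ := hh_bdd
  obtain ⟨δ, hδ, hδh⟩ := Metric.eventually_nhds_iff.mp hh_id
  refine ⟨_, le_max_mul_min_one_sq_norm (lt_min hδ one_pos) (min_le_right _ _)
    (L := 2 * ‖ξ‖ ^ 2) (B := 2 + C * ‖ξ‖) (by nlinarith [hC 0, norm_nonneg (h 0), norm_nonneg ξ])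
    (fun y hy => ?_) (fun y => ?_)⟩
  · have hy : h y = y := hδh (by simpa using hy.trans_le (min_le_left _ _))
    rw [hy, show ∀ a b : ℂ, 1 - a + b = -(a - 1 - b) by intros; ring, norm_neg]
    nlinarith [norm_exp_I_mul_ofReal_sub_one_sub_le ⟪y, ξ⟫, sq_inner_le_sq_norm_mul_sq_norm y ξ]
  · have hinner : |⟪h y, ξ⟫| ≤ C * ‖ξ‖ :=
      (abs_real_inner_le_norm _ _).trans (by gcongr; exact hC y)
    calc _ ≤ ‖1 - Complex.exp (Complex.I * (⟪y, ξ⟫ : ℝ))‖ + ‖Complex.I * (⟪h y, ξ⟫ : ℝ)‖ :=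
          norm_add_le _ _
      _ ≤ (‖(1 : ℂ)‖ + ‖Complex.exp (Complex.I * (⟪y, ξ⟫ : ℝ))‖) + |⟪h y, ξ⟫| := by
          gcongr
          · exact norm_sub_le _ _
          · simp
      _ ≤ 2 + C * ‖ξ‖ := by rw [norm_one, Complex.norm_exp_I_mul_ofReal]; linarith

end InnerProductSpace

section LevyMeasure

variable {E : Type*} [NormedAddCommGroup E] [MeasurableSpace E] [OpensMeasurableSpace E]
  {μ : Measure E}

lemma integrable_min_one_sq_norm (hμ : ∫⁻ y, ENNReal.ofReal (min 1 (‖y‖ ^ 2)) ∂μ < ⊤) :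
    Integrable (fun y => min 1 (‖y‖ ^ 2)) μ :=
  ⟨by fun_prop, (hasFiniteIntegral_iff_ofReal (ae_of_all _ fun y => by positivity)).mpr hμ⟩

lemma measure_norm_gt_lt_top (hμ : ∫⁻ y, ENNReal.ofReal (min 1 (‖y‖ ^ 2)) ∂μ < ⊤) {R : ℝ}
    (hR : 0 < R) : μ {y | R < ‖y‖} < ⊤ := by
  have hc : ENNReal.ofReal (min 1 (R ^ 2)) ≠ 0 := by simp; positivity
  have hsub : {y : E | R < ‖y‖} ⊆
      {y | ENNReal.ofReal (min 1 (R ^ 2)) ≤ ENNReal.ofReal (min 1 (‖y‖ ^ 2))} :=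
    fun y hy => ENNReal.ofReal_le_ofReal (by gcongr; exact hy.le)
  refine (measure_mono hsub).trans_lt (ENNReal.lt_top_of_mul_ne_top_right ?_ hc)
  exact ((mul_meas_ge_le_lintegral₀ (by fun_prop) _).trans_lt hμ).ne

variable [InnerProductSpace ℝ E]

lemma integrable_one_sub_cos_inner (hμ : ∫⁻ y, ENNReal.ofReal (min 1 (‖y‖ ^ 2)) ∂μ < ⊤)
    (ξ : E) : Integrable (fun y => 1 - Real.cos ⟪y, ξ⟫) μ :=
  ((integrable_min_one_sq_norm hμ).const_mul _).mono' (by fun_prop) (ae_of_all _ fun y => by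
    rw [Real.norm_of_nonneg (sub_nonneg.mpr (Real.cos_le_one _))]
    exact one_sub_cos_inner_le y ξ)

lemma continuous_integral_one_sub_cos_inner
    (hμ : ∫⁻ y, ENNReal.ofReal (min 1 (‖y‖ ^ 2)) ∂μ < ⊤) :
    Continuous fun ξ : E => ∫ y, (1 - Real.cos ⟪y, ξ⟫) ∂μ := by
  refine continuous_iff_continuousAt.mpr fun ξ₀ => continuousAt_of_dominated
    (Eventually.of_forall fun ξ => by fun_prop) ?_
    ((integrable_min_one_sq_norm hμ).const_mul (max ((‖ξ₀‖ + 1) ^ 2 / 2) 2))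
    (ae_of_all _ fun y => by fun_prop)
  filter_upwards [Metric.ball_mem_nhds ξ₀ one_pos] with ξ hξ
  refine ae_of_all _ fun y => ?_
  have hξ' : ‖ξ‖ ≤ ‖ξ₀‖ + 1 := by
    have := norm_le_norm_add_norm_sub' ξ ξ₀
    rw [mem_ball_iff_norm] at hξ
    linarith
  rw [Real.norm_of_nonneg (sub_nonneg.mpr (Real.cos_le_one _))]
  exact (one_sub_cos_inner_le y ξ).trans (by gcongr)

end LevyMeasure

section LevySymbol

variable {E : Type*} [NormedAddCommGroup E] [InnerProductSpace ℝ E] [MeasurableSpace E]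
  {μ : Measure E}

noncomputable def levySymbol (h : E → E) (μ : Measure E) (ξ : E) : ℂ :=
  ∫ y, (1 - Complex.exp (Complex.I * (⟪y, ξ⟫ : ℝ)) + Complex.I * (⟪h y, ξ⟫ : ℝ)) ∂μ

-- The real part of `levySymbol`, as an `ℝ≥0∞`-valued integral free of integrability conditions.
noncomputable def oneSubCosTransform (μ : Measure E) (ξ : E) : ℝ≥0∞ :=
  ∫⁻ y, ENNReal.ofReal (1 - Real.cos ⟪y, ξ⟫) ∂μ

@[simp]
lemma oneSubCosTransform_zero (μ : Measure E) : oneSubCosTransform μ 0 = 0 := by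
  simp [oneSubCosTransform]

variable [OpensMeasurableSpace E]

lemma oneSubCosTransform_eq_ofReal_integral
    (hμ : ∫⁻ y, ENNReal.ofReal (min 1 (‖y‖ ^ 2)) ∂μ < ⊤) (ξ : E) :
    oneSubCosTransform μ ξ = ENNReal.ofReal (∫ y, (1 - Real.cos ⟪y, ξ⟫) ∂μ) :=
  (ofReal_integral_eq_lintegral_ofReal (integrable_one_sub_cos_inner hμ ξ)
    (ae_of_all _ fun _ => sub_nonneg.mpr (Real.cos_le_one _))).symm

lemma oneSubCosTransform_ne_top (hμ : ∫⁻ y, ENNReal.ofReal (min 1 (‖y‖ ^ 2)) ∂μ < ⊤)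
    (ξ : E) : oneSubCosTransform μ ξ ≠ ⊤ := by
  rw [oneSubCosTransform_eq_ofReal_integral hμ]
  exact ENNReal.ofReal_ne_top

lemma continuous_oneSubCosTransform (hμ : ∫⁻ y, ENNReal.ofReal (min 1 (‖y‖ ^ 2)) ∂μ < ⊤) :
    Continuous (oneSubCosTransform μ) := by
  simp_rw [funext (oneSubCosTransform_eq_ofReal_integral hμ)]
  exact ENNReal.continuous_ofReal.comp (continuous_integral_one_sub_cos_inner hμ)

lemma oneSubCosTransform_eq_ofReal_re_levySymbol {h : E → E} (hh_cont : Continuous h)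
    (hh_bdd : ∃ C : ℝ, ∀ y, ‖h y‖ ≤ C) (hh_id : ∀ᶠ y in 𝓝 0, h y = y)
    (hμ : ∫⁻ y, ENNReal.ofReal (min 1 (‖y‖ ^ 2)) ∂μ < ⊤) (ξ : E) :
    oneSubCosTransform μ ξ = ENNReal.ofReal (levySymbol h μ ξ).re := by
  obtain ⟨M, hM⟩ := exists_norm_levy_integrand_le hh_bdd hh_id ξ
  have hint : Integrable (fun y => 1 - Complex.exp (Complex.I * (⟪y, ξ⟫ : ℝ)) +
      Complex.I * (⟪h y, ξ⟫ : ℝ)) μ :=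
    ((integrable_min_one_sq_norm hμ).const_mul M).mono' (by fun_prop) (ae_of_all _ hM)
  rw [oneSubCosTransform_eq_ofReal_integral hμ, levySymbol, ← RCLike.re_eq_complex_re,
    ← integral_re hint]
  congr 2 with y
  simp [mul_comm Complex.I, Complex.exp_ofReal_mul_I_re]

end LevySymbol

section RiemannLebesgue

variable {E : Type*} [NormedAddCommGroup E] [InnerProductSpace ℝ E] [FiniteDimensional ℝ E]
  [MeasurableSpace E] [BorelSpace E]

lemma tendsto_setIntegral_cos_inner_cocompact {A : Set E} (hA : MeasurableSet A)
    (hA_fin : volume A ≠ ⊤) :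
    Tendsto (fun y => ∫ ξ in A, Real.cos ⟪y, ξ⟫) (cocompact E) (𝓝 0) := by
  -- Mathlib's Riemann–Lebesgue lemma is stated for the character `𝐞 (-⟪v, w⟫)`;
  -- rescale `w = (2π)⁻¹ • y`.
  have hc : (2 * Real.pi)⁻¹ ≠ 0 := by positivity
  have hRL := (tendsto_integral_exp_inner_smul_cocompact (A.indicator fun _ => (1 : ℂ))).comp
    (Homeomorph.smulOfNeZero _ hc).map_cocompact.le
  refine (Complex.zero_re ▸ (Complex.continuous_re.tendsto 0).comp hRL).congr fun y => ?_
  set c := (2 * Real.pi)⁻¹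
  have hint : IntegrableOn (fun ξ : E => (Real.fourierChar (-⟪ξ, c • y⟫) : ℂ)) A :=
    Measure.integrableOn_of_bounded hA_fin (by fun_prop) (M := 1)
      (ae_of_all _ fun ξ => (Circle.norm_coe _).le)
  have hind : (fun ξ => Real.fourierChar (-⟪ξ, c • y⟫) • A.indicator (fun _ => (1 : ℂ)) ξ) =
      A.indicator fun ξ => (Real.fourierChar (-⟪ξ, c • y⟫) : ℂ) :=
    funext fun ξ => by by_cases hξ : ξ ∈ A <;> simp [hξ, Circle.smul_def]
  simp only [Function.comp_apply, Homeomorph.smulOfNeZero_apply]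
  rw [hind, integral_indicator hA, ← RCLike.re_eq_complex_re, ← integral_re hint]
  congr 1 with ξ
  rw [RCLike.re_eq_complex_re, Real.fourierChar_apply, Complex.exp_ofReal_mul_I_re,
    real_inner_smul_right, real_inner_comm, mul_neg, Real.cos_neg, ← mul_assoc,
    mul_inv_cancel₀ (by positivity), one_mul]

lemma tendsto_setLIntegral_one_sub_cos_inner_cocompact {A : Set E} (hA : MeasurableSet A)
    (hA_fin : volume A ≠ ⊤) :
    Tendsto (fun y => ∫⁻ ξ in A, ENNReal.ofReal (1 - Real.cos ⟪y, ξ⟫)) (cocompact E)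
      (𝓝 (volume A)) := by
  have hcos : ∀ y : E, IntegrableOn (fun ξ => Real.cos ⟪y, ξ⟫) A :=
    fun y => Measure.integrableOn_of_bounded hA_fin (by fun_prop) (M := 1)
      (ae_of_all _ fun ξ => Real.abs_cos_le_one _)
  have hone : IntegrableOn (fun _ => (1 : ℝ)) A := integrableOn_const hA_fin
  have heq : ∀ y : E, ∫⁻ ξ in A, ENNReal.ofReal (1 - Real.cos ⟪y, ξ⟫) =
      ENNReal.ofReal (volume.real A - ∫ ξ in A, Real.cos ⟪y, ξ⟫) := fun y => by
    rw [← ofReal_integral_eq_lintegral_ofReal (f := fun ξ => 1 - Real.cos ⟪y, ξ⟫)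
      (hone.sub (hcos y)) (ae_of_all _ fun _ => sub_nonneg.mpr (Real.cos_le_one _)),
      integral_sub hone (hcos y), setIntegral_const, smul_eq_mul, mul_one]
  simp_rw [heq]
  rw [← ENNReal.ofReal_toReal hA_fin, ← measureReal_def]
  exact (ENNReal.continuous_ofReal.tendsto _).comp
    (by simpa using (tendsto_setIntegral_cos_inner_cocompact hA hA_fin).const_sub (volume.real A))

end RiemannLebesgue

section Tightness

variable {E : Type*} [NormedAddCommGroup E] [InnerProductSpace ℝ E] [FiniteDimensional ℝ E]
  [MeasurableSpace E] [BorelSpace E]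

theorem exists_eventually_measure_norm_gt_lt_of_tendsto_oneSubCosTransform
    {μ : ℕ → Measure E} {ν : Measure E}
    (hμ : ∀ k, ∫⁻ y, ENNReal.ofReal (min 1 (‖y‖ ^ 2)) ∂(μ k) < ⊤)
    (hν : ∫⁻ y, ENNReal.ofReal (min 1 (‖y‖ ^ 2)) ∂ν < ⊤)
    (hlim : ∀ ξ, Tendsto (fun k => oneSubCosTransform (μ k) ξ) atTop
      (𝓝 (oneSubCosTransform ν ξ)))
    {ε : ℝ≥0∞} (hε : 0 < ε) :
    ∃ R : ℝ, ∀ᶠ k in atTop, μ k {y | R < ‖y‖} < ε := by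
  obtain ⟨A, hA, hA₀, hA_fin, hsmall⟩ := exists_setLIntegral_lt_mul_of_tendsto volume
    (fun k => (continuous_oneSubCosTransform (hμ k)).measurable)
    (fun k => oneSubCosTransform_ne_top (hμ k)) (oneSubCosTransform_ne_top hν) hlim
    (continuous_oneSubCosTransform hν).continuousAt (x₀ := 0) (ε := ε / 2)
    (by rw [oneSubCosTransform_zero]; exact ENNReal.half_pos hε.ne')
  obtain ⟨R, hR⟩ : ∃ R : ℝ, ∀ y : E, R ≤ ‖y‖ →
      volume A / 2 ≤ ∫⁻ ξ in A, ENNReal.ofReal (1 - Real.cos ⟪y, ξ⟫) := by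
    have := (tendsto_setLIntegral_one_sub_cos_inner_cocompact hA hA_fin).eventually
      (Ioi_mem_nhds (ENNReal.half_lt_self hA₀ hA_fin))
    rw [← Metric.cobounded_eq_cocompact, ← comap_norm_atTop, eventually_comap,
      eventually_atTop] at this
    obtain ⟨R, hR⟩ := this
    exact ⟨R, fun y hy => (hR _ hy y rfl).le⟩
  refine ⟨max R 1, ?_⟩
  filter_upwards [hsmall] with k hk
  have hkey : volume A / 2 * μ k {y | max R 1 < ‖y‖} ≤ ∫⁻ ξ in A, oneSubCosTransform (μ k) ξ :=
    mul_measure_le_lintegral_lintegral (by fun_prop)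
      (measurableSet_lt measurable_const measurable_norm)
      (measure_norm_gt_lt_top (hμ k) (by positivity)).ne
      fun y hy => hR y ((le_max_left _ _).trans (le_of_lt hy))
  have hA2 : volume A / 2 ≠ 0 := by simpa using hA₀
  have hA2' : volume A / 2 ≠ ⊤ := (ENNReal.div_lt_top hA_fin two_ne_zero).ne
  refine (ENNReal.mul_lt_mul_iff_right hA2 hA2').mp (hkey.trans_lt (hk.trans_eq ?_))
  simp only [div_eq_mul_inv]
  ring

end Tightness

theorem stmt1_general {d : ℕ}
    (h : EuclideanSpace ℝ (Fin d) → EuclideanSpace ℝ (Fin d))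
    (hh_cont : Continuous h) (hh_bdd : ∃ C : ℝ, ∀ y, ‖h y‖ ≤ C)
    (hh_id : ∀ᶠ y in nhds (0 : EuclideanSpace ℝ (Fin d)), h y = y)
    (K : EuclideanSpace ℝ (Fin d) → Measure (EuclideanSpace ℝ (Fin d)))
    (hKint : ∀ x, ∫⁻ y, ENNReal.ofReal (min 1 (‖y‖ ^ 2)) ∂(K x) < ⊤)
    (hcont : ∀ ξ : EuclideanSpace ℝ (Fin d),
      Continuous fun x =>
        ∫ y, (1 - Complex.exp (Complex.I * (⟪y, ξ⟫ : ℝ)) +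
          Complex.I * (⟪h y, ξ⟫ : ℝ)) ∂(K x)) :
    ∀ m : ℝ, 0 < m →
      Tendsto (fun a : ℝ => ⨆ x : {x : EuclideanSpace ℝ (Fin d) // ‖x‖ ≤ m},
          K x.1 {y | a < ‖y‖}) atTop (nhds 0) := by
  intro m _
  have hT : ∀ ξ, Continuous fun x => oneSubCosTransform (K x) ξ := fun ξ => by
    simp_rw [oneSubCosTransform_eq_ofReal_re_levySymbol hh_cont hh_bdd hh_id (hKint _)]
    exact ENNReal.continuous_ofReal.comp (Complex.continuous_re.comp (hcont ξ))
  have hS : IsCompact {x : EuclideanSpace ℝ (Fin d) | ‖x‖ ≤ m} := by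
    simpa only [Metric.closedBall, dist_zero_right] using
      isCompact_closedBall (0 : EuclideanSpace ℝ (Fin d)) m
  refine tendsto_iSup_atTop_nhds_zero_of_isCompact (F := fun x a => K x {y | a < ‖y‖}) hS
    (fun x a b hab => measure_mono fun y hy => hab.trans_lt hy)
    fun x x₀ hx ε hε => exists_eventually_measure_norm_gt_lt_of_tendsto_oneSubCosTransform
      (fun k => hKint (x k)) (hKint x₀) (fun ξ => ((hT ξ).tendsto x₀).comp hx) hε

/-- Let `h` be a truncation function (bounded, continuous, equal to the identity near the
origin) and `K̄` a kernel of Lévy measures on `ℝ^d`. If for every `ξ` the map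
`x ↦ ∫ (1 − e^{i⟨y,ξ⟩} + i⟨h(y),ξ⟩) K̄(x, dy)` is continuous, then for every `m > 0`,
`lim_{a→∞} sup_{‖x‖≤m} K̄(x, {y : ‖y‖ > a}) = 0`. -/
theorem stmt1 {d : ℕ}
    (h : EuclideanSpace ℝ (Fin d) → EuclideanSpace ℝ (Fin d))
    (hh_cont : Continuous h) (hh_bdd : ∃ C : ℝ, ∀ y, ‖h y‖ ≤ C)
    (hh_id : ∀ᶠ y in nhds (0 : EuclideanSpace ℝ (Fin d)), h y = y)
    (K : EuclideanSpace ℝ (Fin d) → Measure (EuclideanSpace ℝ (Fin d)))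
    (hK0 : ∀ x, K x {0} = 0)
    (hKint : ∀ x, ∫⁻ y, ENNReal.ofReal (min 1 (‖y‖ ^ 2)) ∂(K x) < ⊤)
    (hcont : ∀ ξ : EuclideanSpace ℝ (Fin d),
      Continuous fun x =>
        ∫ y, (1 - Complex.exp (Complex.I * (⟪y, ξ⟫ : ℝ)) +
          Complex.I * (⟪h y, ξ⟫ : ℝ)) ∂(K x)) :
    ∀ m : ℝ, 0 < m →
      Tendsto (fun a : ℝ => ⨆ x : {x : EuclideanSpace ℝ (Fin d) // ‖x‖ ≤ m},
          K x.1 {y | a < ‖y‖}) atTop (nhds 0) :=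
  stmt1_general h hh_cont hh_bdd hh_id K hKint hcont
end

section
/- Let α and (α_n)_{n∈ℕ} be càdlàg functions [0,∞) → ℝ^d and suppose there exist time changes λ_n such that sup_{s≥0} |λ_n(s) − s| → 0 and sup_{s∈[0,N]} ‖α_n(λ_n(s)) − α(s)‖ → 0 as n → ∞ for every N ∈ ℕ. If t > 0 satisfies α(t) = α(t-), then X*_t(α_n) → X*_t(α) as n → ∞; consequently, for every continuous function φ : ℝ → ℝ one has φ(X*_t(α_n)) → φ(X*_t(α)). -/
open MeasureTheory Filter Set Topology
open scoped ENNReal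

noncomputable section

/-- A function `f : ℝ → E` is càdlàg (on `[0,∞)`) if it is right-continuous at every
`t ≥ 0` and has a left limit at every `t > 0`. -/
def Cadlag {E : Type*} [NormedAddCommGroup E] (f : ℝ → E) : Prop :=
  (∀ t : ℝ, 0 ≤ t → ContinuousWithinAt f (Ici t) t) ∧
  (∀ t : ℝ, 0 < t → ∃ l, Tendsto f (nhdsWithin t (Iio t)) (nhds l))

/-- The left-limit function `t ↦ f(t-)`, with the convention `f(0-) = f(0)`. -/
def lL {E : Type*} [NormedAddCommGroup E] (f : ℝ → E) (t : ℝ) : E :=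
  if t ≤ 0 then f 0 else Function.leftLim f t

/-- `X*_t(f) = sup_{s ∈ [0,t]} ‖f(s-)‖`. -/
def XStar {E : Type*} [NormedAddCommGroup E] (f : ℝ → E) (t : ℝ) : ℝ :=
  sSup ((fun s => ‖lL f s‖) '' Icc 0 t)

/-- The uniform distance of `f` and `g` on `[0,t]`. -/
def unifDist {E : Type*} [NormedAddCommGroup E] (f g : ℝ → E) (t : ℝ) : ℝ :=
  sSup ((fun s => ‖f s - g s‖) '' Icc 0 t)

end

/-- A time change is a continuous, strictly increasing bijection `λ : [0,∞) → [0,∞)`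
with `λ(0) = 0` (formalized for functions `ℝ → ℝ`, with all conditions on `[0,∞)`). -/
structure IsTimeChange (l : ℝ → ℝ) : Prop where
  cont : Continuous l
  mono : StrictMonoOn l (Set.Ici 0)
  zero : l 0 = 0
  surj : ∀ y : ℝ, 0 ≤ y → ∃ s : ℝ, 0 ≤ s ∧ l s = y

/-!
For `t > 0` and càdlàg `f`, `X*_t(f)` is the supremum of `‖f‖` over `[0, t)`: every left limit
`f(s-)` is a limit of values on `[0, s)`, and every value `f(s)`, `s < t`, is the limit of the
left limits `f(u-)` as `u ↓ s`. Hence a point `s < t` where `‖α(s)‖` almost attains `X*_t(α)` is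
transported to `λₙ(s) < t`, which bounds `X*_t(αₙ)` from below. Conversely every `u < t` is
`λₙ(s)` with `s < t + δ`, and since `α` is continuous at `t`, `‖α‖ ≤ X*_t(α) + ε` on `[0, t + δ)`
for small `δ`, which bounds `X*_t(αₙ)` from above.
-/

lemma IsTimeChange.nonneg {l : ℝ → ℝ} (hl : IsTimeChange l) {s : ℝ} (hs : 0 ≤ s) : 0 ≤ l s := by
  simpa [hl.zero] using hl.mono.monotoneOn self_mem_Ici hs hs

namespace Cadlag

variable {E : Type*} [NormedAddCommGroup E] {f : ℝ → E} {s t C : ℝ}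

lemma tendsto_lL (hf : Cadlag f) (hs : 0 < s) : Tendsto f (𝓝[<] s) (𝓝 (lL f s)) := by
  obtain ⟨c, hc⟩ := hf.2 s hs
  rwa [lL, if_neg hs.not_ge, leftLim_eq_of_tendsto hc]

lemma isBoundedUnder_norm (hf : Cadlag f) (hs : 0 ≤ s) :
    (𝓝[Ici 0] s).IsBoundedUnder (· ≤ ·) (‖f ·‖) := by
  have hright := (hf.1 s hs).norm.isBoundedUnder_le
  rcases hs.eq_or_lt with rfl | hs
  · exact hright
  · refine IsBoundedUnder.mono nhdsWithin_le_nhds ?_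
    rw [← nhdsLT_sup_nhdsGE, IsBoundedUnder, map_sup]
    exact isBounded_sup (hf.tendsto_lL hs).norm.isBoundedUnder_le hright

lemma bddAbove_norm_image_Icc (hf : Cadlag f) (t : ℝ) : BddAbove ((‖f ·‖) '' Icc 0 t) := by
  refine isCompact_Icc.induction_on (p := fun u => BddAbove ((‖f ·‖) '' u)) (by simp)
    (fun u v huv h => h.mono (image_mono huv))
    (fun u v hu hv => by rw [image_union]; exact hu.union hv) fun x hx => ?_
  obtain ⟨C, hC⟩ := hf.isBoundedUnder_norm hx.1
  exact ⟨_, nhdsWithin_mono x Icc_subset_Ici_self hC, C, forall_mem_image.2 fun v hv => hv⟩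

lemma norm_lL_le (hf : Cadlag f) (ht : 0 < t) (hC : ∀ v ∈ Ico 0 t, ‖f v‖ ≤ C)
    (hs : s ∈ Icc 0 t) : ‖lL f s‖ ≤ C := by
  rcases hs.1.eq_or_lt with rfl | hs0
  · simpa [lL] using hC 0 ⟨le_rfl, ht⟩
  · refine le_of_tendsto (hf.tendsto_lL hs0).norm ?_
    filter_upwards [Ioo_mem_nhdsLT hs0] with v hv
    exact hC v ⟨hv.1.le, hv.2.trans_le hs.2⟩

lemma XStar_le (hf : Cadlag f) (ht : 0 < t) (hC : ∀ v ∈ Ico 0 t, ‖f v‖ ≤ C) :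
    XStar f t ≤ C :=
  csSup_le ((nonempty_Icc.2 ht.le).image _)
    (forall_mem_image.2 fun _ hs => hf.norm_lL_le ht hC hs)

lemma norm_lL_le_XStar (hf : Cadlag f) (ht : 0 < t) (hs : s ∈ Icc 0 t) :
    ‖lL f s‖ ≤ XStar f t := by
  obtain ⟨C, hC⟩ := hf.bddAbove_norm_image_Icc t
  refine le_csSup ⟨C, forall_mem_image.2 fun u hu => hf.norm_lL_le ht ?_ hu⟩
    (mem_image_of_mem _ hs)
  exact fun v hv => hC (mem_image_of_mem _ (Ico_subset_Icc_self hv))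

lemma tendsto_lL_nhdsGT (hf : Cadlag f) (hs : 0 ≤ s) : Tendsto (lL f) (𝓝[>] s) (𝓝 (f s)) := by
  refine Metric.nhds_basis_closedBall.tendsto_right_iff.2 fun ε hε => ?_
  obtain ⟨b, hsb, hb⟩ :=
    mem_nhdsGE_iff_exists_Ico_subset.1 (hf.1 s hs (Metric.closedBall_mem_nhds _ hε))
  filter_upwards [Ioo_mem_nhdsGT hsb] with u hu
  refine Metric.isClosed_closedBall.mem_of_tendsto (hf.tendsto_lL (hs.trans_lt hu.1)) ?_
  filter_upwards [Ioo_mem_nhdsLT hu.1] with v hv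
  exact hb ⟨hv.1.le, hv.2.trans hu.2⟩

lemma norm_le_XStar (hf : Cadlag f) (hs : s ∈ Ico 0 t) : ‖f s‖ ≤ XStar f t := by
  refine le_of_tendsto (hf.tendsto_lL_nhdsGT hs.1).norm ?_
  filter_upwards [Ioo_mem_nhdsGT hs.2] with u hu
  exact hf.norm_lL_le_XStar (hs.1.trans_lt hs.2) ⟨hs.1.trans hu.1.le, hu.2.le⟩

lemma exists_norm_le_XStar_add (hf : Cadlag f) (ht : 0 < t) (hcont : f t = lL f t) {ε : ℝ}
    (hε : 0 < ε) : ∃ δ > 0, ∀ s ∈ Ico 0 (t + δ), ‖f s‖ ≤ XStar f t + ε := by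
  obtain ⟨b, htb, hb⟩ :=
    mem_nhdsGE_iff_exists_Ico_subset.1 (hf.1 t ht.le (Metric.closedBall_mem_nhds _ hε))
  refine ⟨b - t, sub_pos.2 htb, fun s hs => ?_⟩
  rcases lt_or_ge s t with hst | hts
  · linarith [hf.norm_le_XStar ⟨hs.1, hst⟩]
  · calc ‖f s‖ ≤ ‖f t‖ + ε := norm_le_of_mem_closedBall (hb ⟨hts, by linarith [hs.2]⟩)
      _ ≤ XStar f t + ε := by
        rw [hcont]
        exact add_le_add_left (hf.norm_lL_le_XStar ht ⟨ht.le, le_rfl⟩) ε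

end Cadlag

section SkorokhodConvergence

variable {E : Type*} [NormedAddCommGroup E] {α : ℝ → E} {αn : ℕ → ℝ → E} {l : ℕ → ℝ → ℝ}
  {t : ℝ}

lemma eventually_lt_XStar (hα : Cadlag α) (hαn : ∀ n, Cadlag (αn n))
    (hl : ∀ n, IsTimeChange (l n))
    (hclose : ∀ δ > 0, ∀ᶠ n in atTop, ∀ s ≥ 0, |l n s - s| < δ)
    (hunif : ∀ (N : ℕ), ∀ ε > 0, ∀ᶠ n in atTop, ∀ s ∈ Icc 0 (N : ℝ), ‖αn n (l n s) - α s‖ < ε)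
    (ht : 0 < t) {a : ℝ} (ha : a < XStar α t) : ∀ᶠ n in atTop, a < XStar (αn n) t := by
  obtain ⟨s, hs, has⟩ : ∃ s ∈ Ico 0 t, a < ‖α s‖ := by
    by_contra! h
    exact ha.not_ge (hα.XStar_le ht h)
  filter_upwards [hclose (t - s) (sub_pos.2 hs.2), hunif ⌈t⌉₊ _ (sub_pos.2 has)] with n hn hn'
  have hls : l n s ∈ Ico 0 t := ⟨(hl n).nonneg hs.1, by linarith [(abs_lt.1 (hn s hs.1)).2]⟩
  have hclose_s := hn' s ⟨hs.1, hs.2.le.trans (Nat.le_ceil t)⟩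
  have hdist := norm_le_insert' (α s) (αn n (l n s))
  rw [norm_sub_rev] at hdist
  calc a < ‖αn n (l n s)‖ := by linarith
    _ ≤ XStar (αn n) t := (hαn n).norm_le_XStar hls

lemma eventually_XStar_lt (hα : Cadlag α) (hαn : ∀ n, Cadlag (αn n))
    (hl : ∀ n, IsTimeChange (l n))
    (hclose : ∀ δ > 0, ∀ᶠ n in atTop, ∀ s ≥ 0, |l n s - s| < δ)
    (hunif : ∀ (N : ℕ), ∀ ε > 0, ∀ᶠ n in atTop, ∀ s ∈ Icc 0 (N : ℝ), ‖αn n (l n s) - α s‖ < ε)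
    (ht : 0 < t) (hcont : α t = lL α t) {b : ℝ} (hb : XStar α t < b) :
    ∀ᶠ n in atTop, XStar (αn n) t < b := by
  obtain ⟨c, hc, hcb⟩ : ∃ c > 0, XStar α t + 2 * c < b :=
    ⟨(b - XStar α t) / 3, by linarith, by linarith⟩
  obtain ⟨δ, hδ, hbound⟩ := hα.exists_norm_le_XStar_add ht hcont hc
  filter_upwards [hclose (min δ 1) (by positivity), hunif ⌈t + 1⌉₊ c hc] with n hn hn'
  refine ((hαn n).XStar_le ht fun u hu => ?_).trans_lt hcb
  obtain ⟨s, hs0, rfl⟩ := (hl n).surj u hu.1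
  have hst : s < t + min δ 1 := by linarith [(abs_lt.1 (hn s hs0)).1, hu.2]
  have hαs := hbound s ⟨hs0, hst.trans_le (by gcongr; exact min_le_left _ _)⟩
  have hclose_s := hn' s ⟨hs0, by linarith [Nat.le_ceil (t + 1), min_le_right δ 1]⟩
  linarith [norm_le_insert' (αn n (l n s)) (α s)]

end SkorokhodConvergence

/-- If càdlàg `α_n → α` in the Skorokhod sense (via time changes `λ_n` with
`sup_{s ≥ 0} |λ_n(s) − s| → 0` and `sup_{s∈[0,N]} ‖α_n(λ_n(s)) − α(s)‖ → 0` for every `N`),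
and `t > 0` satisfies `α(t) = α(t-)`, then `X*_t(α_n) → X*_t(α)`; consequently
`φ(X*_t(α_n)) → φ(X*_t(α))` for every continuous `φ : ℝ → ℝ`. -/
theorem stmt2 {d : ℕ} (α : ℝ → EuclideanSpace ℝ (Fin d))
    (αn : ℕ → ℝ → EuclideanSpace ℝ (Fin d))
    (hα : Cadlag α) (hαn : ∀ n, Cadlag (αn n))
    (l : ℕ → ℝ → ℝ) (hl : ∀ n, IsTimeChange (l n))
    (hsup1 : ∀ ε : ℝ, 0 < ε → ∃ N : ℕ, ∀ n ≥ N, ∀ s : ℝ, 0 ≤ s → |l n s - s| < ε)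
    (hsup2 : ∀ N : ℕ, ∀ ε : ℝ, 0 < ε → ∃ M : ℕ, ∀ n ≥ M,
      ∀ s ∈ Icc (0 : ℝ) (N : ℝ), ‖αn n (l n s) - α s‖ < ε)
    (t : ℝ) (ht : 0 < t) (hcontpt : α t = lL α t) :
    Tendsto (fun n => XStar (αn n) t) atTop (nhds (XStar α t)) ∧
    ∀ φ : ℝ → ℝ, Continuous φ →
      Tendsto (fun n => φ (XStar (αn n) t)) atTop (nhds (φ (XStar α t))) := by
  have hclose : ∀ δ > 0, ∀ᶠ n in atTop, ∀ s ≥ 0, |l n s - s| < δ :=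
    fun δ hδ => eventually_atTop.2 (hsup1 δ hδ)
  have hunif : ∀ (N : ℕ), ∀ ε > 0, ∀ᶠ n in atTop, ∀ s ∈ Icc 0 (N : ℝ),
      ‖αn n (l n s) - α s‖ < ε :=
    fun N ε hε => eventually_atTop.2 (hsup2 N ε hε)
  have hX : Tendsto (fun n => XStar (αn n) t) atTop (𝓝 (XStar α t)) :=
    tendsto_order.2 ⟨fun _ ha => eventually_lt_XStar hα hαn hl hclose hunif ht ha,
      fun _ hb => eventually_XStar_lt hα hαn hl hclose hunif ht hcontpt hb⟩
  exact ⟨hX, fun φ hφ => (hφ.tendsto _).comp hX⟩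
end

section
/- Let g : [0,∞) × ℝ^d → ℝ be continuous, let A : [0,∞) → [0,∞) be continuous and nondecreasing with A(0) = 0, and fix t > 0. Let α and (α_n)_{n∈ℕ} be càdlàg functions [0,∞) → ℝ^d and suppose there exist time changes λ_n with sup_{s≥0} |λ_n(s) − s| → 0 and sup_{s∈[0,N]} ‖α_n(λ_n(s)) − α(s)‖ → 0 for every N ∈ ℕ. Then ∫_{[0,t]} g(s, α_n(s-)) dA(s) → ∫_{[0,t]} g(s, α(s-)) dA(s) as n → ∞, where dA is the Lebesgue–Stieltjes measure associated with A. -/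
open MeasureTheory Filter Set Topology
open scoped ENNReal NNReal

/-!
Since `A` is continuous, `dA` has no atoms, while a càdlàg function has only countably many
discontinuities. Hence `dA`-almost every `s ∈ (0, t]` is a continuity point of `α` and of every
`αn n`; there the left limits can be replaced by the values themselves, and `αn n s → α s`
because `λ_n` moves `s` only a little. For large `n` the `αn n` are bounded on `[0, t]` by
`1 + sup ‖α‖` over `[0, t + 1]`, so dominated convergence applies.
-/

lemma StieltjesFunction.nullSingletonClass_measure_of_continuous {f : StieltjesFunction ℝ}
    (hf : Continuous f) : NullSingletonClass f.measure :=
  ⟨fun x => by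
    rw [f.measure_singleton, hf.continuousWithinAt.leftLim_eq, sub_self, ENNReal.ofReal_zero]⟩

/-- The continuity points of any function into a metric space form a `G_δ`, hence a measurable
set. -/
theorem aestronglyMeasurable_of_ae_continuousAt {X Y : Type*} [TopologicalSpace X]
    [MeasurableSpace X] [OpensMeasurableSpace X] [PseudoMetricSpace Y]
    [SecondCountableTopologyEither X Y] {f : X → Y} {μ : Measure X}
    (hf : ∀ᵐ x ∂μ, ContinuousAt f x) : AEStronglyMeasurable f μ := by
  have hS : MeasurableSet {x | ContinuousAt f x} :=
    (IsGδ.setOfPred_continuousAt f).measurableSet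
  rw [← Measure.restrict_eq_self_of_ae_mem hf]
  exact ContinuousOn.aestronglyMeasurable (fun x hx => ContinuousAt.continuousWithinAt hx) hS

lemma lL_eq_of_continuousAt {E : Type*} [NormedAddCommGroup E] {f : ℝ → E} {x : ℝ}
    (hx : 0 < x) (h : ContinuousAt f x) : lL f x = f x := by
  rw [lL, if_neg hx.not_ge, h.continuousWithinAt.leftLim_eq]

namespace Cadlag

variable {E : Type*} [NormedAddCommGroup E] {f : ℝ → E}

lemma tendsto_leftLim (hf : Cadlag f) {x : ℝ} (hx : 0 < x) :
    Tendsto f (𝓝[<] x) (𝓝 (Function.leftLim f x)) :=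
  tendsto_leftLim_of_tendsto (hf.2 x hx)

lemma continuousAt_of_leftLim_eq (hf : Cadlag f) {x : ℝ} (hx : 0 < x)
    (h : Function.leftLim f x = f x) : ContinuousAt f x := by
  rw [ContinuousAt, ← nhdsLT_sup_nhdsGE x]
  exact tendsto_sup.2 ⟨h ▸ hf.tendsto_leftLim hx, hf.1 x hx.le⟩

/-- All values of `f` and of its left limits on a short interval `(a, x)` are close to
`f(x-)`. -/
lemma exists_forall_Ioo_dist_leftLim_le (hf : Cadlag f) {x ε : ℝ} (hx : 0 < x) (hε : 0 < ε) :
    ∃ a < x, ∀ y ∈ Ioo a x, dist (f y) (Function.leftLim f y) ≤ ε := by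
  obtain ⟨a, ha, hclose⟩ := mem_nhdsLT_iff_exists_Ioo_subset.1
    (Metric.tendsto_nhds.1 (hf.tendsto_leftLim hx) (ε / 2) (half_pos hε))
  have hIoo : ∀ z ∈ Ioo (max a 0) x, dist (f z) (Function.leftLim f x) ≤ ε / 2 :=
    fun z hz => (hclose ⟨(le_max_left a 0).trans_lt hz.1, hz.2⟩).le
  refine ⟨max a 0, max_lt ha hx, fun y hy => ?_⟩
  have hleft : dist (Function.leftLim f y) (Function.leftLim f x) ≤ ε / 2 :=
    le_of_tendsto ((hf.tendsto_leftLim ((le_max_right a 0).trans_lt hy.1)).dist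
      tendsto_const_nhds)
      (eventually_of_mem (Ioo_mem_nhdsLT hy.1) fun z hz => hIoo z ⟨hz.1, hz.2.trans hy.2⟩)
  calc dist (f y) (Function.leftLim f y)
      ≤ dist (f y) (Function.leftLim f x) + dist (Function.leftLim f y) (Function.leftLim f x) :=
        dist_triangle_right _ _ _
    _ ≤ ε / 2 + ε / 2 := add_le_add (hIoo y hy) hleft
    _ = ε := add_halves ε

lemma countable_setOf_lt_dist_leftLim (hf : Cadlag f) {ε : ℝ} (hε : 0 < ε) :
    {x | 0 < x ∧ ε < dist (f x) (Function.leftLim f x)}.Countable := by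
  set D := {x | 0 < x ∧ ε < dist (f x) (Function.leftLim f x)}
  -- every point of `D` is isolated from the left within `D`
  refine Countable.mono (s₂ := {x ∈ D | 𝓝[D ∩ Iio x] x = ⊥}) (fun x hx => ⟨hx, ?_⟩)
    countable_setOfPred_isolated_left_within
  obtain ⟨a, hax, ha⟩ := hf.exists_forall_Ioo_dist_leftLim_le hx.1 hε
  refine empty_mem_iff_bot.1 (mem_nhdsWithin.2 ⟨Ioi a, isOpen_Ioi, hax, ?_⟩)
  rintro y ⟨hay, hyD, hyx⟩
  exact (ha y ⟨hay, hyx⟩).not_gt hyD.2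

lemma countable_setOf_not_continuousAt (hf : Cadlag f) :
    {x | 0 < x ∧ ¬ContinuousAt f x}.Countable := by
  refine Countable.mono ?_ (countable_iUnion fun n : ℕ =>
    hf.countable_setOf_lt_dist_leftLim (Nat.one_div_pos_of_nat (n := n)))
  rintro x ⟨hx, hcont⟩
  have hjump : 0 < dist (f x) (Function.leftLim f x) :=
    dist_pos.2 fun h => hcont (hf.continuousAt_of_leftLim_eq hx h.symm)
  obtain ⟨n, hn⟩ := exists_nat_one_div_lt hjump
  exact mem_iUnion.2 ⟨n, hx, hn⟩

lemma ae_continuousAt (hf : Cadlag f) (μ : Measure ℝ) [NullSingletonClass μ] :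
    ∀ᵐ x ∂μ, 0 < x → ContinuousAt f x :=
  ae_iff.2 <| by
    simpa only [Classical.not_imp] using hf.countable_setOf_not_continuousAt.measure_zero μ

lemma ae_restrict_Ioc_continuousAt (hf : Cadlag f) (μ : Measure ℝ) [NullSingletonClass μ]
    (t : ℝ) : ∀ᵐ x ∂μ.restrict (Ioc 0 t), ContinuousAt f x := by
  filter_upwards [ae_restrict_mem measurableSet_Ioc, ae_restrict_of_ae (hf.ae_continuousAt μ)]
    with x hx hcont using hcont hx.1

lemma setIntegral_Icc_lL {F : Type*} [NormedAddCommGroup F] [NormedSpace ℝ F] (hf : Cadlag f)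
    (μ : Measure ℝ) [NullSingletonClass μ] (g : ℝ → E → F) (t : ℝ) :
    ∫ s in Icc 0 t, g s (lL f s) ∂μ = ∫ s in Ioc 0 t, g s (f s) ∂μ := by
  rw [integral_Icc_eq_integral_Ioc]
  refine integral_congr_ae ?_
  filter_upwards [ae_restrict_mem measurableSet_Ioc, hf.ae_restrict_Ioc_continuousAt μ t]
    with s hs hcont
  rw [lL_eq_of_continuousAt hs.1 hcont]

lemma exists_forall_Icc_norm_le (hf : Cadlag f) (T : ℝ) : ∃ C, ∀ x ∈ Icc 0 T, ‖f x‖ ≤ C := by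
  refine isCompact_Icc.induction_on (p := fun S => ∃ C, ∀ x ∈ S, ‖f x‖ ≤ C) ⟨0, by simp⟩
    (fun S S' hSS' ⟨C, hC⟩ => ⟨C, fun x hx => hC x (hSS' hx)⟩)
    (fun S S' ⟨C, hC⟩ ⟨C', hC'⟩ => ⟨max C C', ?_⟩) fun x hx => ?_
  · rintro x (hx | hx)
    exacts [(hC x hx).trans (le_max_left C C'), (hC' x hx).trans (le_max_right C C')]
  have hright : ∀ᶠ y in 𝓝[≥] x, ‖f y‖ ≤ ‖f x‖ + 1 :=
    ((hf.1 x hx.1).norm.eventually (ge_mem_nhds (lt_add_one _)))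
  rcases hx.1.eq_or_lt with rfl | hx0
  · exact ⟨{y | ‖f y‖ ≤ ‖f 0‖ + 1}, nhdsWithin_mono _ Icc_subset_Ici_self hright, _,
      fun y hy => hy⟩
  · have hleft : ∀ᶠ y in 𝓝[<] x, ‖f y‖ ≤ ‖Function.leftLim f x‖ + 1 :=
      (hf.tendsto_leftLim hx0).norm.eventually (ge_mem_nhds (lt_add_one _))
    have hnear : ∀ᶠ y in 𝓝 x, ‖f y‖ ≤ max (‖Function.leftLim f x‖ + 1) (‖f x‖ + 1) := by
      rw [← nhdsLT_sup_nhdsGE, eventually_sup]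
      exact ⟨hleft.mono fun y hy => hy.trans (le_max_left _ _),
        hright.mono fun y hy => hy.trans (le_max_right _ _)⟩
    exact ⟨{y | ‖f y‖ ≤ max (‖Function.leftLim f x‖ + 1) (‖f x‖ + 1)},
      mem_nhdsWithin_of_mem_nhds hnear, _, fun y hy => hy⟩

end Cadlag

section Skorokhod

variable {E : Type*} [NormedAddCommGroup E] {α : ℝ → E} {αn : ℕ → ℝ → E} {l : ℕ → ℝ → ℝ}

/-- The time `v` is the `λ_n`-preimage of `u`. -/
lemma eventually_exists_near_of_skorokhod (hl : ∀ n, IsTimeChange (l n))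
    (hsup1 : ∀ ε : ℝ, 0 < ε → ∃ N : ℕ, ∀ n ≥ N, ∀ s : ℝ, 0 ≤ s → |l n s - s| < ε)
    (hsup2 : ∀ N : ℕ, ∀ ε : ℝ, 0 < ε → ∃ M : ℕ, ∀ n ≥ M,
      ∀ s ∈ Icc (0 : ℝ) (N : ℝ), ‖αn n (l n s) - α s‖ < ε)
    (T : ℝ) {δ ε : ℝ} (hδ : 0 < δ) (hε : 0 < ε) :
    ∀ᶠ n in atTop, ∀ u ∈ Icc 0 T, ∃ v ∈ Icc 0 (T + δ), |v - u| < δ ∧ ‖αn n u - α v‖ < ε := by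
  obtain ⟨N, hN⟩ := hsup1 δ hδ
  obtain ⟨M, hM⟩ := hsup2 ⌈T + δ⌉₊ ε hε
  filter_upwards [eventually_ge_atTop N, eventually_ge_atTop M] with n hnN hnM u hu
  obtain ⟨v, hv0, rfl⟩ := (hl n).surj u hu.1
  have hvu : |v - l n v| < δ := abs_sub_comm (l n v) v ▸ hN n hnN v hv0
  have hvT : v ≤ T + δ := by linarith [(abs_lt.1 hvu).2, hu.2]
  exact ⟨v, ⟨hv0, hvT⟩, hvu, hM n hnM v ⟨hv0, hvT.trans (Nat.le_ceil _)⟩⟩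

lemma eventually_forall_Icc_norm_le_of_skorokhod (hl : ∀ n, IsTimeChange (l n))
    (hsup1 : ∀ ε : ℝ, 0 < ε → ∃ N : ℕ, ∀ n ≥ N, ∀ s : ℝ, 0 ≤ s → |l n s - s| < ε)
    (hsup2 : ∀ N : ℕ, ∀ ε : ℝ, 0 < ε → ∃ M : ℕ, ∀ n ≥ M,
      ∀ s ∈ Icc (0 : ℝ) (N : ℝ), ‖αn n (l n s) - α s‖ < ε)
    {T C : ℝ} (hC : ∀ s ∈ Icc 0 (T + 1), ‖α s‖ ≤ C) :
    ∀ᶠ n in atTop, ∀ u ∈ Icc 0 T, ‖αn n u‖ ≤ C + 1 := by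
  filter_upwards [eventually_exists_near_of_skorokhod hl hsup1 hsup2 T one_pos one_pos]
    with n hn u hu
  obtain ⟨v, hv, -, hclose⟩ := hn u hu
  calc ‖αn n u‖ ≤ ‖αn n u - α v‖ + ‖α v‖ := norm_le_norm_sub_add _ _
    _ ≤ 1 + C := add_le_add hclose.le (hC v hv)
    _ = C + 1 := add_comm 1 C

lemma tendsto_apply_of_skorokhod (hl : ∀ n, IsTimeChange (l n))
    (hsup1 : ∀ ε : ℝ, 0 < ε → ∃ N : ℕ, ∀ n ≥ N, ∀ s : ℝ, 0 ≤ s → |l n s - s| < ε)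
    (hsup2 : ∀ N : ℕ, ∀ ε : ℝ, 0 < ε → ∃ M : ℕ, ∀ n ≥ M,
      ∀ s ∈ Icc (0 : ℝ) (N : ℝ), ‖αn n (l n s) - α s‖ < ε)
    {s : ℝ} (hs : 0 ≤ s) (hcont : ContinuousAt α s) :
    Tendsto (fun n => αn n s) atTop (𝓝 (α s)) := by
  refine Metric.tendsto_nhds.2 fun ε hε => ?_
  obtain ⟨δ, hδ, hα⟩ := Metric.continuousAt_iff.1 hcont (ε / 2) (half_pos hε)
  filter_upwards [eventually_exists_near_of_skorokhod hl hsup1 hsup2 s hδ (half_pos hε)]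
    with n hn
  obtain ⟨v, -, hvs, hclose⟩ := hn s ⟨hs, le_rfl⟩
  calc dist (αn n s) (α s) ≤ dist (αn n s) (α v) + dist (α v) (α s) := dist_triangle _ _ _
    _ < ε / 2 + ε / 2 := add_lt_add (by rwa [dist_eq_norm]) (hα (by rwa [Real.dist_eq]))
    _ = ε := add_halves ε

end Skorokhod

theorem stmt8_general {d : ℕ}
    (g : ℝ → EuclideanSpace ℝ (Fin d) → ℝ)
    (hg : ContinuousOn (fun p : ℝ × EuclideanSpace ℝ (Fin d) => g p.1 p.2)
      (Ici 0 ×ˢ univ))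
    (A : StieltjesFunction ℝ) (hA : Continuous A)
    (t : ℝ)
    (α : ℝ → EuclideanSpace ℝ (Fin d))
    (αn : ℕ → ℝ → EuclideanSpace ℝ (Fin d))
    (hα : Cadlag α) (hαn : ∀ n, Cadlag (αn n))
    (l : ℕ → ℝ → ℝ) (hl : ∀ n, IsTimeChange (l n))
    (hsup1 : ∀ ε : ℝ, 0 < ε → ∃ N : ℕ, ∀ n ≥ N, ∀ s : ℝ, 0 ≤ s → |l n s - s| < ε)
    (hsup2 : ∀ N : ℕ, ∀ ε : ℝ, 0 < ε → ∃ M : ℕ, ∀ n ≥ M,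
      ∀ s ∈ Icc (0 : ℝ) (N : ℝ), ‖αn n (l n s) - α s‖ < ε) :
    Tendsto (fun n => ∫ s in Icc (0 : ℝ) t, g s (lL (αn n) s) ∂A.measure) atTop
      (nhds (∫ s in Icc (0 : ℝ) t, g s (lL α s) ∂A.measure)) := by
  have := A.nullSingletonClass_measure_of_continuous hA
  have hmem : ∀ᵐ s ∂A.measure.restrict (Ioc 0 t), s ∈ Ioc 0 t :=
    ae_restrict_mem measurableSet_Ioc
  have hg_cont : ∀ {s} x, 0 < s →
      ContinuousAt (fun p : ℝ × EuclideanSpace ℝ (Fin d) => g p.1 p.2) (s, x) :=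
    fun x hs => hg.continuousAt (prod_mem_nhds (Ici_mem_nhds hs) univ_mem)
  rw [hα.setIntegral_Icc_lL _ g t,
    tendsto_congr fun n => (hαn n).setIntegral_Icc_lL _ g t]
  obtain ⟨R, hR⟩ := hα.exists_forall_Icc_norm_le (t + 1)
  obtain ⟨C, hC⟩ := IsCompact.exists_bound_of_continuousOn
    (isCompact_Icc.prod (isCompact_closedBall 0 (R + 1)))
    (hg.mono (prod_mono Icc_subset_Ici_self (subset_univ _)))
  refine tendsto_integral_filter_of_dominated_convergence (fun _ => C) ?_ ?_ ?_ ?_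
  · refine Eventually.of_forall fun n => aestronglyMeasurable_of_ae_continuousAt ?_
    filter_upwards [hmem, (hαn n).ae_restrict_Ioc_continuousAt _ t] with s hs hcont
    exact (hg_cont _ hs.1).comp (f := fun s => (s, αn n s)) (continuousAt_id.prodMk hcont)
  · filter_upwards [eventually_forall_Icc_norm_le_of_skorokhod hl hsup1 hsup2 hR] with n hn
    filter_upwards [hmem] with s hs
    have hs' := Ioc_subset_Icc_self hs
    exact hC (s, αn n s) ⟨hs', mem_closedBall_zero_iff.2 (hn s hs')⟩
  · exact integrableOn_const measure_Ioc_lt_top.ne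
  · filter_upwards [hmem, hα.ae_restrict_Ioc_continuousAt _ t] with s hs hcont
    exact (hg_cont _ hs.1).tendsto.comp
      (tendsto_const_nhds.prodMk_nhds (tendsto_apply_of_skorokhod hl hsup1 hsup2 hs.1.le hcont))

/-- If `g : [0,∞) × ℝ^d → ℝ` is continuous, `A` is a continuous nondecreasing function
with `A(0) = 0` (a continuous Stieltjes function), `t > 0`, and càdlàg `α_n → α` in the
Skorokhod sense via time changes `λ_n`, then
`∫_{[0,t]} g(s, α_n(s-)) dA(s) → ∫_{[0,t]} g(s, α(s-)) dA(s)`. -/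
theorem stmt8 {d : ℕ}
    (g : ℝ → EuclideanSpace ℝ (Fin d) → ℝ)
    (hg : ContinuousOn (fun p : ℝ × EuclideanSpace ℝ (Fin d) => g p.1 p.2)
      (Ici 0 ×ˢ univ))
    (A : StieltjesFunction ℝ) (hA : Continuous A) (hA0 : A 0 = 0)
    (t : ℝ) (ht : 0 < t)
    (α : ℝ → EuclideanSpace ℝ (Fin d))
    (αn : ℕ → ℝ → EuclideanSpace ℝ (Fin d))
    (hα : Cadlag α) (hαn : ∀ n, Cadlag (αn n))
    (l : ℕ → ℝ → ℝ) (hl : ∀ n, IsTimeChange (l n))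
    (hsup1 : ∀ ε : ℝ, 0 < ε → ∃ N : ℕ, ∀ n ≥ N, ∀ s : ℝ, 0 ≤ s → |l n s - s| < ε)
    (hsup2 : ∀ N : ℕ, ∀ ε : ℝ, 0 < ε → ∃ M : ℕ, ∀ n ≥ M,
      ∀ s ∈ Icc (0 : ℝ) (N : ℝ), ‖αn n (l n s) - α s‖ < ε) :
    Tendsto (fun n => ∫ s in Icc (0 : ℝ) t, g s (lL (αn n) s) ∂A.measure) atTop
      (nhds (∫ s in Icc (0 : ℝ) t, g s (lL α s) ∂A.measure)) :=
  stmt8_general g hg A hA t α αn hα hαn l hl hsup1 hsup2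
end

section
/- Let (Ω, F) be a measurable space equipped with a filtration (F^o_t)_{t≥0} of sub-σ-fields of F, let (τ_n)_{n∈ℕ} be (F^o_t)-stopping times, and let P, Q and (P^n)_{n∈ℕ} be probability measures on (Ω, F) such that: (a) P agrees with P^n on the σ-field F^o_{τ_n} for every n; (b) P^n is absolutely continuous with respect to Q for every n; (c) lim_{n→∞} P^n(τ_n ≤ t) = 0 for every t ≥ 0. Then P is locally absolutely continuous with respect to Q: for every t ≥ 0 and every G ∈ F^o_t, Q(G) = 0 implies P(G) = 0. -/
open MeasureTheory Filter
open scoped ENNReal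

/-!
Fix `t` and `G ∈ F^o_t` with `Q G = 0`. Both `{τ_n ≤ t}` and `G ∩ {τ_n > t}` lie in `F^o_{τ_n}`,
where `P` and `P^n` agree, so
`P G ≤ P (G ∩ {τ_n > t}) + P {τ_n ≤ t} = P^n (G ∩ {τ_n > t}) + P^n {τ_n ≤ t} ≤ P^n G + P^n {τ_n ≤ t}`,
and `P^n G = 0` since `P^n ≪ Q`. Letting `n → ∞` gives `P G = 0`.
-/

/-- `G ∈ F^o_τ`. -/
def StoppedMeasurableSet {Ω : Type*} (Fo : ℝ → MeasurableSpace Ω) (τ : Ω → ℝ≥0∞)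
    (G : Set Ω) : Prop :=
  ∀ t : ℝ, 0 ≤ t → MeasurableSet[Fo t] (G ∩ {ω | τ ω ≤ ENNReal.ofReal t})

section StoppingTime

variable {Ω : Type*} {Fo : ℝ → MeasurableSpace Ω} {τ : Ω → ℝ≥0∞} {t : ℝ}

lemma stoppedMeasurableSet_le (hFo_mono : ∀ s t : ℝ, 0 ≤ s → s ≤ t → Fo s ≤ Fo t)
    (hτ : ∀ t : ℝ, 0 ≤ t → MeasurableSet[Fo t] {ω | τ ω ≤ ENNReal.ofReal t}) (ht : 0 ≤ t) :
    StoppedMeasurableSet Fo τ {ω | τ ω ≤ ENNReal.ofReal t} := by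
  intro s hs
  rcases le_or_gt s t with hst | hts
  · have hsub : {ω | τ ω ≤ ENNReal.ofReal s} ⊆ {ω | τ ω ≤ ENNReal.ofReal t} :=
      fun ω hω => le_trans hω (ENNReal.ofReal_le_ofReal hst)
    rw [Set.inter_eq_right.mpr hsub]
    exact hτ s hs
  · exact (hFo_mono t s ht hts.le _ (hτ t ht)).inter (hτ s hs)

lemma stoppedMeasurableSet_diff_le (hFo_mono : ∀ s t : ℝ, 0 ≤ s → s ≤ t → Fo s ≤ Fo t)
    (hτ : ∀ t : ℝ, 0 ≤ t → MeasurableSet[Fo t] {ω | τ ω ≤ ENNReal.ofReal t}) (ht : 0 ≤ t)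
    {G : Set Ω} (hG : MeasurableSet[Fo t] G) :
    StoppedMeasurableSet Fo τ (G \ {ω | τ ω ≤ ENNReal.ofReal t}) := by
  intro s hs
  rcases le_or_gt s t with hst | hts
  · have hempty : (G \ {ω | τ ω ≤ ENNReal.ofReal t}) ∩ {ω | τ ω ≤ ENNReal.ofReal s} = ∅ :=
      Set.eq_empty_of_forall_notMem fun ω ⟨⟨_, hgt⟩, hle⟩ =>
        hgt (le_trans hle (ENNReal.ofReal_le_ofReal hst))
    rw [hempty]
    exact @MeasurableSet.empty Ω (Fo s)
  · have hmono := hFo_mono t s ht hts.le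
    exact ((hmono _ hG).diff (hmono _ (hτ t ht))).inter (hτ s hs)

end StoppingTime

lemma measure_le_add_of_agree {Ω : Type*} [MeasurableSpace Ω] {μ ν : Measure Ω} {A G : Set Ω}
    (hA : μ A = ν A) (hGA : μ (G \ A) = ν (G \ A)) : μ G ≤ ν G + ν A :=
  calc μ G ≤ μ (G ∩ A) + μ (G \ A) := measure_le_inter_add_sdiff μ G A
    _ ≤ ν A + ν G := by
      rw [hGA, ← hA]
      exact add_le_add (measure_mono Set.inter_subset_right) (measure_mono Set.sdiff_subset)
    _ = ν G + ν A := add_comm _ _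

theorem stmt16_general {Ω : Type*} [F : MeasurableSpace Ω]
    (Fo : ℝ → MeasurableSpace Ω)
    (hFoF : ∀ t : ℝ, 0 ≤ t → Fo t ≤ F)
    (hFo_mono : ∀ s t : ℝ, 0 ≤ s → s ≤ t → Fo s ≤ Fo t)
    (τ : ℕ → Ω → ℝ≥0∞)
    (hτ : ∀ n, ∀ t : ℝ, 0 ≤ t → MeasurableSet[Fo t] {ω | τ n ω ≤ ENNReal.ofReal t})
    (P Q : Measure Ω) (Pn : ℕ → Measure Ω)
    (hagree : ∀ n, ∀ G : Set Ω, MeasurableSet[F] G →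
      (∀ t : ℝ, 0 ≤ t → MeasurableSet[Fo t] (G ∩ {ω | τ n ω ≤ ENNReal.ofReal t})) →
      P G = Pn n G)
    (habs : ∀ n, Pn n ≪ Q)
    (hlim : ∀ t : ℝ, 0 ≤ t →
      Tendsto (fun n => Pn n {ω | τ n ω ≤ ENNReal.ofReal t}) atTop (nhds 0)) :
    ∀ t : ℝ, 0 ≤ t → ∀ G : Set Ω, MeasurableSet[Fo t] G → Q G = 0 → P G = 0 := by
  intro t ht G hG hQG
  have hbound : ∀ n, P G ≤ Pn n {ω | τ n ω ≤ ENNReal.ofReal t} := fun n =>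
    calc P G ≤ Pn n G + Pn n {ω | τ n ω ≤ ENNReal.ofReal t} :=
          measure_le_add_of_agree
            (hagree n _ (hFoF t ht _ (hτ n t ht)) (stoppedMeasurableSet_le hFo_mono (hτ n) ht))
            (hagree n _ ((hFoF t ht _ hG).diff (hFoF t ht _ (hτ n t ht)))
              (stoppedMeasurableSet_diff_le hFo_mono (hτ n) ht hG))
      _ = Pn n {ω | τ n ω ≤ ENNReal.ofReal t} := by rw [habs n hQG, zero_add]
  exact nonpos_iff_eq_zero.mp (ge_of_tendsto' (hlim t ht) hbound)

/-- Let `(Ω, F)` be a measurable space with a filtration `(F^o_t)_{t≥0}` of sub-σ-fields,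
`(τ_n)` stopping times, and `P`, `Q`, `(P^n)` probability measures such that (a) `P`
agrees with `P^n` on `F^o_{τ_n}`, (b) `P^n ≪ Q`, and (c) `P^n(τ_n ≤ t) → 0` for every
`t ≥ 0`. Then `P` is locally absolutely continuous w.r.t. `Q`: for `t ≥ 0` and
`G ∈ F^o_t`, `Q(G) = 0` implies `P(G) = 0`. -/
theorem stmt16 {Ω : Type*} [F : MeasurableSpace Ω]
    (Fo : ℝ → MeasurableSpace Ω)
    (hFoF : ∀ t : ℝ, 0 ≤ t → Fo t ≤ F)
    (hFo_mono : ∀ s t : ℝ, 0 ≤ s → s ≤ t → Fo s ≤ Fo t)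
    (τ : ℕ → Ω → ℝ≥0∞)
    (hτ : ∀ n, ∀ t : ℝ, 0 ≤ t → MeasurableSet[Fo t] {ω | τ n ω ≤ ENNReal.ofReal t})
    (P Q : Measure Ω) (Pn : ℕ → Measure Ω)
    (hP : IsProbabilityMeasure P) (hQ : IsProbabilityMeasure Q)
    (hPn : ∀ n, IsProbabilityMeasure (Pn n))
    (hagree : ∀ n, ∀ G : Set Ω, MeasurableSet[F] G →
      (∀ t : ℝ, 0 ≤ t → MeasurableSet[Fo t] (G ∩ {ω | τ n ω ≤ ENNReal.ofReal t})) →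
      P G = Pn n G)
    (habs : ∀ n, Pn n ≪ Q)
    (hlim : ∀ t : ℝ, 0 ≤ t →
      Tendsto (fun n => Pn n {ω | τ n ω ≤ ENNReal.ofReal t}) atTop (nhds 0)) :
    ∀ t : ℝ, 0 ≤ t → ∀ G : Set Ω, MeasurableSet[Fo t] G → Q G = 0 → P G = 0 :=
  stmt16_general (F := F) Fo hFoF hFo_mono τ hτ P Q Pn hagree habs hlim
end
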